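/- arXiv:2310.14394 — 2 statements merged into one kernel-verified Lean document; each statement's English description precedes it below -/
import Mathlib

section
/- A ReLU network ψ : ℝ → ℝ is differentiable at every point x at which no hidden neuron's pre-activation equals zero, and at such a point its derivative equals the slope α computed by the forward recursion with masks given by the activation pattern at x. -/
/-- Outputs of the successive hidden layers of a ReLU network:
`layerOut … 0 = x` and `layerOut … (i+1) = ReLU(W⁽ⁱ⁾ layerOut … i + b⁽ⁱ⁾)`. -/
noncomputable def layerOut (d : ℕ → ℕ)
    (W : (i : ℕ) → Matrix (Fin (d (i + 1))) (Fin (d i)) ℝ)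
    (b : (i : ℕ) → Fin (d (i + 1)) → ℝ) (x : Fin (d 0) → ℝ) :
    (i : ℕ) → Fin (d i) → ℝ
  | 0 => x
  | (i + 1) => fun j => max ((W i).mulVec (layerOut d W b x i) j + b i j) 0

/-- Pre-activation of neuron `j` in layer `i+1` at input `x`. -/
noncomputable def preact (d : ℕ → ℕ)
    (W : (i : ℕ) → Matrix (Fin (d (i + 1))) (Fin (d i)) ℝ)
    (b : (i : ℕ) → Fin (d (i + 1)) → ℝ) (x : Fin (d 0) → ℝ)
    (i : ℕ) (j : Fin (d (i + 1))) : ℝ :=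
  (W i).mulVec (layerOut d W b x i) j + b i j

/-- Forward recursion for the first-order coefficients, with masks `D`:
`α₀ = I`, `α_{i+1} = D_{i+1} (W⁽ⁱ⁺¹⁾ αᵢ)`. -/
noncomputable def fwdAlpha (d : ℕ → ℕ)
    (W : (i : ℕ) → Matrix (Fin (d (i + 1))) (Fin (d i)) ℝ)
    (D : (i : ℕ) → Fin (d (i + 1)) → Bool) :
    (i : ℕ) → Matrix (Fin (d i)) (Fin (d 0)) ℝ
  | 0 => 1
  | (i + 1) => fun j l => if D i j then (W i * fwdAlpha d W D i) j l else 0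

/-- Forward recursion for the constant terms, with masks `D`:
`β₀ = 0`, `β_{i+1} = D_{i+1} (W⁽ⁱ⁺¹⁾ βᵢ + b⁽ⁱ⁺¹⁾)`. -/
noncomputable def fwdBeta (d : ℕ → ℕ)
    (W : (i : ℕ) → Matrix (Fin (d (i + 1))) (Fin (d i)) ℝ)
    (b : (i : ℕ) → Fin (d (i + 1)) → ℝ)
    (D : (i : ℕ) → Fin (d (i + 1)) → Bool) :
    (i : ℕ) → Fin (d i) → ℝ
  | 0 => 0
  | (i + 1) => fun j => if D i j then (W i).mulVec (fwdBeta d W b D i) j + b i j else 0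

lemma mulVec_hasDerivAt' {n m : ℕ} (M : Matrix (Fin m) (Fin n) ℝ)
    (f : ℝ → Fin n → ℝ) (a : Fin n → ℝ) (x₀ : ℝ)
    (hf : ∀ l, HasDerivAt (fun t => f t l) (a l) x₀) (j : Fin m) :
    HasDerivAt (fun t => M.mulVec (f t) j) (∑ l, M j l * a l) x₀ := by
  simp only [Matrix.mulVec, dotProduct]
  exact HasDerivAt.fun_sum fun l _ => (hf l).const_mul _

/-- a ReLU network `ℝ → ℝ` is differentiable at every point `x₀`
where no hidden neuron's pre-activation is zero, with derivative the slope
computed by the forward recursion with masks given by the activation pattern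
at `x₀`. -/
theorem reluNet_hasDerivAt (d : ℕ → ℕ) (h0 : d 0 = 1)
    (W : (i : ℕ) → Matrix (Fin (d (i + 1))) (Fin (d i)) ℝ)
    (b : (i : ℕ) → Fin (d (i + 1)) → ℝ) (k : ℕ) (j0 : Fin (d (k + 1))) (x₀ : ℝ)
    (hnz : ∀ i < k, ∀ j, preact d W b (fun _ => x₀) i j ≠ 0) :
    HasDerivAt
      (fun t : ℝ => (W k).mulVec (layerOut d W b (fun _ => t) k) j0 + b k j0)
      ((W k * fwdAlpha d W
          (fun i j => decide (0 < preact d W b (fun _ => x₀) i j)) k) j0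
        ⟨0, by omega⟩)
      x₀ := by
  set D := fun i j => decide (0 < preact d W b (fun _ : Fin (d 0) => x₀) i j) with hD
  have z : Fin (d 0) := ⟨0, by omega⟩
  have main : ∀ i, i ≤ k → ∀ j : Fin (d i),
      HasDerivAt (fun t : ℝ => layerOut d W b (fun _ => t) i j)
        (fwdAlpha d W D i j ⟨0, by omega⟩) x₀ := by
    intro i
    induction i with
    | zero =>
      intro _ j
      have hj : j = ⟨0, by omega⟩ := by
        apply Fin.ext; omega
      subst hj
      simp only [layerOut, fwdAlpha, Matrix.one_apply_eq]
      exact hasDerivAt_id x₀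
    | succ i ih =>
      intro hik j
      have hlt : i < k := by omega
      have ih' := ih (by omega)
      have hpre : HasDerivAt (fun t : ℝ => preact d W b (fun _ => t) i j)
          ((W i * fwdAlpha d W D i) j ⟨0, by omega⟩) x₀ := by
        simp only [preact, Matrix.mul_apply]
        exact (mulVec_hasDerivAt' (W i) _ _ x₀ ih' j).add_const _
      have hnz' := hnz i hlt j
      have heq : (fun t : ℝ => layerOut d W b (fun _ => t) (i + 1) j)
          = fun t => max (preact d W b (fun _ => t) i j) 0 := by
        funext t; simp [layerOut, preact]
      rw [heq]
      rcases lt_or_gt_of_ne hnz' with hneg | hpos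
      · have hDf : D i j = false := by
          simp [hD, decide_eq_false_iff_not, not_lt, le_of_lt hneg]
        have hev : ∀ᶠ t in nhds x₀, preact d W b (fun _ => t) i j < 0 :=
          hpre.continuousAt.eventually (eventually_lt_nhds hneg)
        have : (fun t : ℝ => max (preact d W b (fun _ => t) i j) 0)
            =ᶠ[nhds x₀] fun _ => (0 : ℝ) := by
          filter_upwards [hev] with t ht
          simp [max_eq_right (le_of_lt ht)]
        have h0' : HasDerivAt (fun _ : ℝ => (0 : ℝ)) 0 x₀ := hasDerivAt_const x₀ 0
        have := h0'.congr_of_eventuallyEq this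
        simpa [fwdAlpha, hDf] using this
      · have hDt : D i j = true := by simp [hD, hpos]
        have hev : ∀ᶠ t in nhds x₀, 0 < preact d W b (fun _ => t) i j :=
          hpre.continuousAt.eventually (eventually_gt_nhds hpos)
        have : (fun t : ℝ => max (preact d W b (fun _ => t) i j) 0)
            =ᶠ[nhds x₀] fun t => preact d W b (fun _ => t) i j := by
          filter_upwards [hev] with t ht
          simp [max_eq_left (le_of_lt ht)]
        have := hpre.congr_of_eventuallyEq this
        simpa [fwdAlpha, hDt] using this
  have hfin := mulVec_hasDerivAt' (W k) _ _ x₀ (main k le_rfl) j0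
  have := hfin.add_const (b k j0)
  simpa [Matrix.mul_apply] using this
end

section
/- For a ReLU network ψ : ℝⁿ → ℝ and fixed input x₀, let (α, β) be the output of the forward algorithm at x₀ (so ψ(x₀) = αᵀx₀ + β). Then there exists an open neighborhood U of x₀ (whenever all pre-activations at x₀ are nonzero) such that ψ(x) = αᵀx + β for all x ∈ U. -/
lemma layerOut_continuous (d : ℕ → ℕ)
    (W : (i : ℕ) → Matrix (Fin (d (i + 1))) (Fin (d i)) ℝ)
    (b : (i : ℕ) → Fin (d (i + 1)) → ℝ) :
    ∀ i, Continuous fun x => layerOut d W b x i := by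
  intro i
  induction i with
  | zero => exact continuous_id
  | succ i ih =>
    apply continuous_pi
    intro j
    have h1 : Continuous fun x => (W i).mulVec (layerOut d W b x i) j + b i j := by
      apply Continuous.add _ continuous_const
      simp only [Matrix.mulVec, dotProduct]
      exact continuous_finset_sum _ fun l _ =>
        continuous_const.mul ((continuous_apply l).comp ih)
    exact h1.max continuous_const

lemma preact_continuous (d : ℕ → ℕ)
    (W : (i : ℕ) → Matrix (Fin (d (i + 1))) (Fin (d i)) ℝ)
    (b : (i : ℕ) → Fin (d (i + 1)) → ℝ) (i : ℕ) (j : Fin (d (i + 1))) :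
    Continuous fun x => preact d W b x i j := by
  unfold preact
  apply Continuous.add _ continuous_const
  simp only [Matrix.mulVec, dotProduct]
  exact continuous_finset_sum _ fun l _ =>
    continuous_const.mul ((continuous_apply l).comp (layerOut_continuous d W b i))

lemma layerOut_locally_affine (d : ℕ → ℕ)
    (W : (i : ℕ) → Matrix (Fin (d (i + 1))) (Fin (d i)) ℝ)
    (b : (i : ℕ) → Fin (d (i + 1)) → ℝ) (k : ℕ) (x₀ : Fin (d 0) → ℝ)
    (hnz : ∀ i < k, ∀ j, preact d W b x₀ i j ≠ 0) :
    ∃ U : Set (Fin (d 0) → ℝ), IsOpen U ∧ x₀ ∈ U ∧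
      ∀ x ∈ U, layerOut d W b x k =
        (fwdAlpha d W (fun i j => decide (0 < preact d W b x₀ i j)) k).mulVec x
          + fwdBeta d W b (fun i j => decide (0 < preact d W b x₀ i j)) k := by
  set D : (i : ℕ) → Fin (d (i + 1)) → Bool :=
    fun i j => decide (0 < preact d W b x₀ i j) with hD
  induction k with
  | zero =>
    refine ⟨Set.univ, isOpen_univ, Set.mem_univ _, fun x _ => ?_⟩
    funext l
    simp [layerOut, fwdAlpha, fwdBeta, Matrix.one_mulVec]
  | succ k ih =>
    obtain ⟨U, hUo, hx₀U, hU⟩ := ih (fun i hi j => hnz i (Nat.lt_succ_of_lt hi) j)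
    set S : Fin (d (k + 1)) → Set (Fin (d 0) → ℝ) :=
      fun j => if 0 < preact d W b x₀ k j
        then {x | 0 < preact d W b x k j}
        else {x | preact d W b x k j < 0} with hS
    have hSo : ∀ j, IsOpen (S j) := by
      intro j
      by_cases h : 0 < preact d W b x₀ k j
      · simp only [hS, if_pos h]
        exact isOpen_lt continuous_const (preact_continuous d W b k j)
      · simp only [hS, if_neg h]
        exact isOpen_lt (preact_continuous d W b k j) continuous_const
    have hx₀S : ∀ j, x₀ ∈ S j := by
      intro j
      rcases lt_or_gt_of_ne (hnz k (Nat.lt_succ_self k) j) with h | h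
      · simp [hS, not_lt.mpr h.le, h.ne, h]
      · simp [hS, h]
    refine ⟨U ∩ ⋂ j, S j, hUo.inter (isOpen_iInter_of_finite hSo),
      ⟨hx₀U, Set.mem_iInter.mpr hx₀S⟩, fun x hx => ?_⟩
    obtain ⟨hxU, hxS⟩ := hx
    have hxS' := Set.mem_iInter.mp hxS
    have hkey : ∀ j, preact d W b x k j
        = (W k * fwdAlpha d W D k).mulVec x j
          + ((W k).mulVec (fwdBeta d W b D k) j + b k j) := by
      intro j
      unfold preact
      rw [hU x hxU, Matrix.mulVec_add, ← Matrix.mulVec_mulVec]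
      simp [add_assoc]
    funext j
    show max ((W k).mulVec (layerOut d W b x k) j + b k j) 0 = _
    have hpre : preact d W b x k j = (W k).mulVec (layerOut d W b x k) j + b k j := rfl
    by_cases h : 0 < preact d W b x₀ k j
    · have hx0 : 0 < preact d W b x k j := by
        have := hxS' j; simp only [hS, h, if_true, Set.mem_setOf_eq] at this; exact this
      rw [← hpre, max_eq_left hx0.le, hkey j]
      simp [fwdAlpha, fwdBeta, hD, h, Matrix.mulVec, dotProduct]
    · have hx0 : preact d W b x k j < 0 := by
        have := hxS' j; simp only [hS, h, if_false, Set.mem_setOf_eq] at this; exact this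
      rw [← hpre, max_eq_right hx0.le]
      simp only [Pi.add_apply, Matrix.mulVec, dotProduct, fwdAlpha, fwdBeta, hD]
      simp [h]

/-- for a ReLU network and a fixed input `x₀` at which all
pre-activations are nonzero, with `(α, β)` the output of the forward algorithm
at `x₀`, there is an open neighborhood `U` of `x₀` on which the network agrees
with the affine map `x ↦ α x + β`. -/
theorem reluNet_locally_affine (d : ℕ → ℕ)
    (W : (i : ℕ) → Matrix (Fin (d (i + 1))) (Fin (d i)) ℝ)
    (b : (i : ℕ) → Fin (d (i + 1)) → ℝ) (k : ℕ) (x₀ : Fin (d 0) → ℝ)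
    (hnz : ∀ i < k, ∀ j, preact d W b x₀ i j ≠ 0) :
    ∃ U : Set (Fin (d 0) → ℝ), IsOpen U ∧ x₀ ∈ U ∧
      ∀ x ∈ U,
        (W k).mulVec (layerOut d W b x k) + b k =
          (W k * fwdAlpha d W (fun i j => decide (0 < preact d W b x₀ i j)) k).mulVec x
            + ((W k).mulVec
                (fwdBeta d W b (fun i j => decide (0 < preact d W b x₀ i j)) k)
              + b k) := by
  obtain ⟨U, hUo, hx₀U, hU⟩ := layerOut_locally_affine d W b k x₀ hnz
  refine ⟨U, hUo, hx₀U, fun x hx => ?_⟩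
  rw [hU x hx, Matrix.mulVec_add, ← Matrix.mulVec_mulVec]
  abel
end
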